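/- The divergence-zero derivations S(n) ⊂ W(n) — the subalgebra spanned at each level 1−p by the traceless tensors K^{a_1⋯a_p}{}_b (those with all contractions of b against an upper index vanishing) plus all of level 1 and the traceless part of level 0 — form a Z-graded Lie subalgebra of W(n) whose components vanish below level −n+2. -/

import Mathlib

/-- The generator `θ^a` of the Grassmann algebra `Λ(n) = ExteriorAlgebra K (Fin n → K)`. -/
noncomputable def theta (K : Type) [Field K] (n : ℕ) (a : Fin n) :
    ExteriorAlgebra K (Fin n → K) :=
  ExteriorAlgebra.ι K (Pi.single a 1)

/-- The degree-`q` component of the Grassmann algebra. -/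
noncomputable def grassDeg (K : Type) [Field K] (n : ℕ) (q : ℕ) :
    Submodule K (ExteriorAlgebra K (Fin n → K)) :=
  LinearMap.range (ExteriorAlgebra.ι K : (Fin n → K) →ₗ[K] ExteriorAlgebra K (Fin n → K)) ^ q

/-- The parity-`i` component of the Grassmann algebra. -/
noncomputable def grassPar (K : Type) [Field K] (n : ℕ) (i : ZMod 2) :
    Submodule K (ExteriorAlgebra K (Fin n → K)) :=
  ⨆ q ∈ {q : ℕ | (q : ZMod 2) = i}, grassDeg K n q

/-- A superderivation of the Grassmann algebra of parity `ε`: a parity-homogeneous linear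
map satisfying the graded Leibniz rule `d(xy) = d(x)y + (−1)^{|d||x|} x d(y)`. -/
def IsSuperDer (K : Type) [Field K] (n : ℕ) (ε : ZMod 2)
    (d : Module.End K (ExteriorAlgebra K (Fin n → K))) : Prop :=
  (∀ i : ZMod 2, ∀ x ∈ grassPar K n i, d x ∈ grassPar K n (i + ε)) ∧
  (∀ q : ℕ, ∀ x ∈ grassDeg K n q, ∀ y,
    d (x * y) = d x * y + ((-1 : K) ^ (ε.val * q)) • (x * d y))

/-- `D` is the family of odd partial derivatives `∂/∂θ^b`: the odd superderivations with
`∂θ^a/∂θ^b = δ^a_b`. -/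
def IsPartials (K : Type) [Field K] (n : ℕ)
    (D : Fin n → Module.End K (ExteriorAlgebra K (Fin n → K))) : Prop :=
  ∀ b, IsSuperDer K n 1 (D b) ∧
    ∀ a, D b (theta K n a) = algebraMap K _ (if a = b then (1 : K) else 0)

/-- The derivation `K^{a_1⋯a_p}{}_b = θ^{a_1}⋯θ^{a_p} ∂/∂θ^b`. -/
noncomputable def Kgen (K : Type) [Field K] (n : ℕ)
    (D : Fin n → Module.End K (ExteriorAlgebra K (Fin n → K)))
    (p : ℕ) (a : Fin p → Fin n) (b : Fin n) :
    Module.End K (ExteriorAlgebra K (Fin n → K)) :=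
  LinearMap.mulLeft K ((List.ofFn fun i => theta K n (a i)).prod) ∘ₗ D b

/-- The level-`ℓ` component of `W(n)`: the span of the `K^{a_1⋯a_p}{}_b` with `ℓ = 1 - p`. -/
noncomputable def Wlevel (K : Type) [Field K] (n : ℕ)
    (D : Fin n → Module.End K (ExteriorAlgebra K (Fin n → K))) (ℓ : ℤ) :
    Submodule K (Module.End K (ExteriorAlgebra K (Fin n → K))) :=
  Submodule.span K {d | ∃ (p : ℕ) (a : Fin p → Fin n) (b : Fin n),
    ℓ = 1 - (p : ℤ) ∧ d = Kgen K n D p a b}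

/-- The divergence of a derivation: `div d = Σ_b ∂/∂θ^b (d θ^b)`. -/
noncomputable def divMap (K : Type) [Field K] (n : ℕ)
    (D : Fin n → Module.End K (ExteriorAlgebra K (Fin n → K))) :
    Module.End K (ExteriorAlgebra K (Fin n → K)) →ₗ[K] ExteriorAlgebra K (Fin n → K) where
  toFun d := ∑ b, D b (d (theta K n b))
  map_add' := by intro d₁ d₂; simp [Finset.sum_add_distrib]
  map_smul' := by intro c d; simp [Finset.smul_sum]

/-- The level-`ℓ` component of `S(n)`: the divergence-free part of `Wlevel ℓ`. -/
noncomputable def Slevel (K : Type) [Field K] (n : ℕ)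
    (D : Fin n → Module.End K (ExteriorAlgebra K (Fin n → K))) (ℓ : ℤ) :
    Submodule K (Module.End K (ExteriorAlgebra K (Fin n → K))) :=
  Wlevel K n D ℓ ⊓ LinearMap.ker (divMap K n D)

/-!
Write `u ∂_e` for the derivation `x ↦ u · ∂x/∂θ^e`, so that the level `1 - p` of `W(n)` is
spanned by the `u ∂_e` with `u` a monomial of degree `p`. For homogeneous `u`, `v` of degrees
`p`, `q`, the graded Leibniz rule, the anticommutation of the `∂_b` and the graded commutativity
of `Λ(n)` give
`[u ∂_b, v ∂_d] = u ∂_b(v) ∂_d - (-1)^{(1-p)(1-q)} v ∂_d(u) ∂_b` and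
`div [X, Y] = ± X(div Y) ± Y(div X)`;
both sides of either identity are bilinear, so they extend from these generators to all of `W(n)`.
Hence the bracket respects levels and preserves divergence-freeness.

Below level `1 - n` every monomial vanishes. At level `1 - n` every `X` is `θ^1⋯θ^n Σ c_b ∂_b`:
it kills every homogeneous component of `Λ(n)` except the linear one, on which
`X(θ^b) = θ^b · div X`, so a divergence-free `X` of level `1 - n` is zero.
-/

theorem LinearMap.apply_mem_of_mem_span₂ {R M N P : Type*} [CommSemiring R] [AddCommMonoid M]
    [AddCommMonoid N] [AddCommMonoid P] [Module R M] [Module R N] [Module R P]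
    (f : M →ₗ[R] N →ₗ[R] P) {s : Set M} {t : Set N} {p : Submodule R P}
    (h : ∀ x ∈ s, ∀ y ∈ t, f x y ∈ p) {x : M} {y : N}
    (hx : x ∈ Submodule.span R s) (hy : y ∈ Submodule.span R t) : f x y ∈ p := by
  have hle : Submodule.map₂ f (Submodule.span R s) (Submodule.span R t) ≤ p := by
    rw [Submodule.map₂_span_span, Submodule.span_le]
    rintro - ⟨x, hx, y, hy, rfl⟩
    exact h x hx y hy
  exact hle (Submodule.apply_mem_map₂ f hx hy)

section SuperBracket

variable {R M : Type*} [CommRing R] [AddCommGroup M] [Module R M]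

noncomputable def superBracket (s : R) :
    Module.End R M →ₗ[R] Module.End R M →ₗ[R] Module.End R M :=
  LinearMap.mul R _ - s • (LinearMap.mul R _).flip

theorem superBracket_apply (s : R) (x y : Module.End R M) :
    superBracket s x y = x ∘ₗ y - s • (y ∘ₗ x) := rfl

end SuperBracket

namespace ExteriorAlgebra

variable {R M : Type*} [CommRing R] [AddCommGroup M] [Module R M]

theorem mul_mem_exteriorPower {p q : ℕ} {x y : ExteriorAlgebra R M}
    (hx : x ∈ ⋀[R]^p M) (hy : y ∈ ⋀[R]^q M) : x * y ∈ ⋀[R]^(p + q) M := by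
  rw [exteriorPower, pow_add]
  exact Submodule.mul_mem_mul hx hy

theorem ι_mul_comm_of_mem_exteriorPower (m : M) {q : ℕ} {y : ExteriorAlgebra R M}
    (hy : y ∈ ⋀[R]^q M) : ι R m * y = (-1 : R) ^ q • (y * ι R m) := by
  induction hy using Submodule.pow_induction_on_left' with
  | algebraMap r => simp [Algebra.commutes]
  | add x y i _ _ hx hy => rw [mul_add, hx, hy, add_mul, smul_add]
  | mem_mul m' hm' i x _ ih =>
    obtain ⟨m', rfl⟩ := hm'
    have hswap : ι R m * ι R m' = -(ι R m' * ι R m) :=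
      eq_neg_of_add_eq_zero_left (ι_add_mul_swap m m')
    rw [← mul_assoc, hswap, neg_mul, mul_assoc, ih, mul_smul_comm, ← mul_assoc, pow_succ]
    simp

theorem mul_comm_of_mem_exteriorPower {p q : ℕ} {x y : ExteriorAlgebra R M}
    (hx : x ∈ ⋀[R]^p M) (hy : y ∈ ⋀[R]^q M) : x * y = (-1 : R) ^ (p * q) • (y * x) := by
  induction hx using Submodule.pow_induction_on_left' with
  | algebraMap r => simp [Algebra.commutes]
  | add x x' i _ _ hx hx' => rw [add_mul, hx, hx', mul_add, smul_add]
  | mem_mul m hm i x _ ih =>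
    obtain ⟨m, rfl⟩ := hm
    rw [mul_assoc, ih, mul_smul_comm, ← mul_assoc, ι_mul_comm_of_mem_exteriorPower m hy,
      smul_mul_assoc, smul_smul, ← pow_add, mul_assoc, Nat.succ_mul, add_comm]

theorem iSup_exteriorPower_eq_top : ⨆ q : ℕ, ⋀[R]^q M = ⊤ :=
  (DirectSum.Decomposition.isInternal _).submodule_iSup_eq_top

theorem linearMap_ext_exteriorPower {N : Type*} [AddCommGroup N] [Module R N]
    {f g : ExteriorAlgebra R M →ₗ[R] N} (h : ∀ q, ∀ x ∈ ⋀[R]^q M, f x = g x) : f = g := by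
  refine LinearMap.ext fun x => ?_
  have hx : x ∈ ⨆ q : ℕ, ⋀[R]^q M := by rw [iSup_exteriorPower_eq_top]; trivial
  exact Submodule.iSup_induction _ (motive := fun x => f x = g x) hx h (by simp)
    fun x y hx hy => by simp [hx, hy]

theorem exteriorPower_eq_bot_of_finrank_lt {K V : Type*} [Field K] [AddCommGroup V] [Module K V]
    [FiniteDimensional K V] {q : ℕ} (hq : Module.finrank K V < q) : ⋀[K]^q V = ⊥ := by
  rw [← ιMulti_span_fixedDegree, Submodule.span_eq_bot]
  rintro - ⟨v, rfl⟩
  refine AlternatingMap.map_linearDependent _ v fun hv => ?_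
  simpa using hv.fintype_card_le_finrank.trans_lt hq

end ExteriorAlgebra

open ExteriorAlgebra

section Grassmann

variable {K : Type} [Field K] {n : ℕ}

local notation "Λ" => ExteriorAlgebra K (Fin n → K)

theorem neg_one_zpow_one_sub_mul_one_sub (p q : ℕ) :
    (-1 : K) ^ ((1 - p : ℤ) * (1 - q)) = -((-1) ^ p * (-1) ^ q * (-1) ^ (p * q)) := by
  rw [show (1 - p : ℤ) * (1 - q) = ((p + q + p * q + 1 : ℕ) : ℤ) + (-2 : ℤ) * (p + q) by
    push_cast; ring, zpow_add₀ (by norm_num), zpow_natCast, zpow_mul]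
  norm_num [pow_add]

theorem grassDeg_eq_bot {q : ℕ} (hq : n < q) : grassDeg K n q = ⊥ :=
  exteriorPower_eq_bot_of_finrank_lt (by simpa using hq)

theorem theta_prod_eq_ιMulti {p : ℕ} (a : Fin p → Fin n) :
    (List.ofFn fun i => theta K n (a i)).prod = ιMulti K p (fun i => Pi.single (a i) 1) :=
  (ιMulti_apply _).symm

theorem theta_prod_mem_grassDeg {p : ℕ} (a : Fin p → Fin n) :
    (List.ofFn fun i => theta K n (a i)).prod ∈ grassDeg K n p := by
  rw [theta_prod_eq_ιMulti]
  exact ιMulti_range K p ⟨_, rfl⟩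

theorem grassDeg_le_span_theta_prod (p : ℕ) :
    grassDeg K n p ≤ Submodule.span K
      {x | ∃ a : Fin p → Fin n, x = (List.ofFn fun i => theta K n (a i)).prod} := by
  have hspan : Submodule.span K (Set.range fun a : Fin n => (Pi.single a 1 : Fin n → K)) = ⊤ := by
    simpa only [← Pi.basisFun_apply] using (Pi.basisFun K (Fin n)).span_eq
  rw [grassDeg, ← exteriorPower,
    ← exteriorPower.ιMulti_span_fixedDegree_of_span_eq_top K p _ hspan]
  refine Submodule.span_mono ?_
  rintro - ⟨v, hv, rfl⟩
  choose a ha using fun i => hv ⟨i, rfl⟩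
  refine ⟨a, ?_⟩
  rw [theta_prod_eq_ιMulti]
  congr
  funext i
  exact (ha i).symm

variable (D : Fin n → Module.End K (ExteriorAlgebra K (Fin n → K)))

/-- The derivation `u ∂/∂θ^e`. -/
noncomputable def vecField (e : Fin n) : Λ →ₗ[K] Module.End K Λ :=
  LinearMap.lcomp K _ (D e) ∘ₗ LinearMap.mul K _

variable {D}

theorem vecField_apply (e : Fin n) (u : Λ) : vecField D e u = LinearMap.mulLeft K u ∘ₗ D e := rfl

theorem Kgen_eq_vecField (p : ℕ) (a : Fin p → Fin n) (b : Fin n) :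
    Kgen K n D p a b = vecField D b (List.ofFn fun i => theta K n (a i)).prod := rfl

theorem vecField_mem_Wlevel {p : ℕ} {u : Λ} (hu : u ∈ grassDeg K n p) (e : Fin n) :
    vecField D e u ∈ Wlevel K n D (1 - p) := by
  have h : grassDeg K n p ≤ (Wlevel K n D (1 - p)).comap (vecField D e) := by
    refine (grassDeg_le_span_theta_prod p).trans (Submodule.span_le.2 ?_)
    rintro - ⟨a, rfl⟩
    exact Submodule.subset_span ⟨p, a, e, rfl, rfl⟩
  exact h hu

theorem Wlevel_eq_bot {ℓ : ℤ} (hℓ : ℓ < 1 - n) : Wlevel K n D ℓ = ⊥ := by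
  rw [Wlevel, Submodule.span_eq_bot]
  rintro - ⟨p, a, b, rfl, rfl⟩
  have h := theta_prod_mem_grassDeg (K := K) a
  rw [grassDeg_eq_bot (by omega), Submodule.mem_bot] at h
  rw [Kgen_eq_vecField, h, map_zero]

end Grassmann

namespace IsPartials

variable {K : Type} [Field K] {n : ℕ}
  {D : Fin n → Module.End K (ExteriorAlgebra K (Fin n → K))} (hD : IsPartials K n D)
include hD

local notation "Λ" => ExteriorAlgebra K (Fin n → K)

theorem leibniz {q : ℕ} {x : Λ} (hx : x ∈ grassDeg K n q) (b : Fin n) (y : Λ) :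
    D b (x * y) = D b x * y + (-1 : K) ^ q • (x * D b y) := by
  simpa [ZMod.val_one] using (hD b).1.2 q x hx y

theorem apply_algebraMap (b : Fin n) (c : K) : D b (algebraMap K Λ c) = 0 := by
  have h1 : D b 1 = 0 := by simpa using hD.leibniz (q := 0) (Submodule.algebraMap_mem 1) b 1
  rw [Algebra.algebraMap_eq_smul_one, map_smul, h1, smul_zero]

theorem apply_ι (b : Fin n) (v : Fin n → K) : D b (ι K v) = algebraMap K Λ (v b) := by
  have hθ : ∀ a, D b (ι K (Pi.single a 1)) = algebraMap K _ (if a = b then 1 else 0) := (hD b).2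
  conv_lhs => rw [← (Pi.basisFun K (Fin n)).sum_repr v]
  simp only [Pi.basisFun_repr, Pi.basisFun_apply, map_sum, map_smul, hθ]
  simp [Algebra.algebraMap_eq_smul_one]

theorem apply_ι_mul (b : Fin n) (v : Fin n → K) (y : Λ) :
    D b (ι K v * y) = v b • y - ι K v * D b y := by
  rw [hD.leibniz (q := 1) (by simp [grassDeg]) b y, hD.apply_ι, ← Algebra.smul_def, pow_one,
    neg_one_smul, sub_eq_add_neg]

theorem apply_eq_zero_of_mem_grassDeg_zero {x : Λ} (hx : x ∈ grassDeg K n 0) (b : Fin n) :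
    D b x = 0 := by
  obtain ⟨c, rfl⟩ := Submodule.mem_one.mp (by simpa [grassDeg] using hx)
  exact hD.apply_algebraMap b c

theorem apply_mem_grassDeg_pred {q : ℕ} {x : Λ} (hx : x ∈ grassDeg K n q) (b : Fin n) :
    D b x ∈ grassDeg K n (q - 1) := by
  induction hx using Submodule.pow_induction_on_left' with
  | algebraMap c => simp [hD.apply_algebraMap]
  | add x y i _ _ hx hy => rw [map_add]; exact add_mem hx hy
  | mem_mul m hm i x hx ih =>
    obtain ⟨v, rfl⟩ := hm
    rw [hD.apply_ι_mul]
    refine sub_mem (Submodule.smul_mem _ _ hx) ?_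
    rcases i with _ | i
    · simp [hD.apply_eq_zero_of_mem_grassDeg_zero hx]
    · have h := mul_mem_exteriorPower (p := 1) (by simp : ι K v ∈ ⋀[K]^1 (Fin n → K)) ih
      rwa [add_comm] at h

theorem comp_eq_neg_comp (b d : Fin n) : D b ∘ₗ D d = -(D d ∘ₗ D b) := by
  refine linearMap_ext_exteriorPower fun q x hx => ?_
  rw [LinearMap.neg_apply, eq_neg_iff_add_eq_zero]
  induction hx using Submodule.pow_induction_on_left' with
  | algebraMap c => simp [hD.apply_algebraMap]
  | add x y i _ _ hx hy =>
    simp only [LinearMap.comp_apply, map_add] at *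
    rw [add_add_add_comm, hx, hy, add_zero]
  | mem_mul m hm i x _ ih =>
    obtain ⟨v, rfl⟩ := hm
    simp only [LinearMap.comp_apply, hD.apply_ι_mul, map_sub, map_smul] at *
    calc _ = ι K v * (D b (D d x) + D d (D b x)) := by rw [mul_add]; abel
      _ = 0 := by rw [ih, mul_zero]

theorem apply_apply_eq_neg (b d : Fin n) (x : Λ) : D b (D d x) = -D d (D b x) :=
  LinearMap.congr_fun (hD.comp_eq_neg_comp b d) x

theorem apply_mul_apply_comm {p q : ℕ} (b d : Fin n) {u v : Λ}
    (hu : u ∈ grassDeg K n p) (hv : v ∈ grassDeg K n q) :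
    D d u * D b v = (-1 : K) ^ ((1 - p : ℤ) * (1 - q)) • (D b v * D d u) := by
  rcases p with _ | p
  · simp [hD.apply_eq_zero_of_mem_grassDeg_zero hu]
  rcases q with _ | q
  · simp [hD.apply_eq_zero_of_mem_grassDeg_zero hv]
  rw [show (1 - (p + 1 : ℕ) : ℤ) * (1 - (q + 1 : ℕ)) = (p * q : ℕ) by push_cast; ring, zpow_natCast]
  exact mul_comm_of_mem_exteriorPower (hD.apply_mem_grassDeg_pred hu d)
    (hD.apply_mem_grassDeg_pred hv b)

end IsPartials

section VectorFields

variable {K : Type} [Field K] {n : ℕ}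
  {D : Fin n → Module.End K (ExteriorAlgebra K (Fin n → K))} (hD : IsPartials K n D)
include hD

local notation "Λ" => ExteriorAlgebra K (Fin n → K)

theorem divMap_vecField (e : Fin n) (u : Λ) : divMap K n D (vecField D e u) = D e u := by
  simp [divMap, vecField_apply, (hD e).2, apply_ite (D _)]

theorem vecField_comp_vecField {q : ℕ} (b d : Fin n) (u : Λ) {v : Λ} (hv : v ∈ grassDeg K n q) :
    vecField D b u ∘ₗ vecField D d v
      = vecField D d (u * D b v) + (-1 : K) ^ q • (LinearMap.mulLeft K (u * v) ∘ₗ D b ∘ₗ D d) := by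
  refine LinearMap.ext fun x => ?_
  simp [vecField_apply, hD.leibniz hv, mul_add]

theorem vecField_bracket {p q : ℕ} (b d : Fin n) {u v : Λ}
    (hu : u ∈ grassDeg K n p) (hv : v ∈ grassDeg K n q) :
    vecField D b u ∘ₗ vecField D d v
        - (-1 : K) ^ ((1 - p : ℤ) * (1 - q)) • (vecField D d v ∘ₗ vecField D b u)
      = vecField D d (u * D b v) - (-1 : K) ^ ((1 - p : ℤ) * (1 - q)) • vecField D b (v * D d u) := by
  have hsq (k : ℕ) : (-1 : K) ^ k * (-1) ^ k = 1 := by rw [← mul_pow]; norm_num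
  have hsign : (-1 : K) ^ ((1 - p : ℤ) * (1 - q)) * (-1) ^ p * (-1) ^ (q * p) = -(-1) ^ q := by
    rw [neg_one_zpow_one_sub_mul_one_sub, mul_comm q p]
    linear_combination (-(-1 : K) ^ q * (-1) ^ (p * q) * (-1) ^ (p * q)) * hsq p
      - (-1 : K) ^ q * hsq (p * q)
  rw [vecField_comp_vecField hD b d u hv, vecField_comp_vecField hD d b v hu,
    mul_comm_of_mem_exteriorPower hv hu, hD.comp_eq_neg_comp d b]
  have hswap : LinearMap.mulLeft K ((-1 : K) ^ (q * p) • (u * v)) ∘ₗ (-(D b ∘ₗ D d))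
      = -((-1 : K) ^ (q * p) • (LinearMap.mulLeft K (u * v) ∘ₗ D b ∘ₗ D d)) := by
    refine LinearMap.ext fun x => ?_
    simp [mul_assoc]
  rw [hswap]
  linear_combination (norm := module) hsign • (LinearMap.mulLeft K (u * v) ∘ₗ D b ∘ₗ D d)

theorem vecField_mul_apply_mem_Wlevel {p q : ℕ} (b d : Fin n) {u v : Λ}
    (hu : u ∈ grassDeg K n p) (hv : v ∈ grassDeg K n q) :
    vecField D d (u * D b v) ∈ Wlevel K n D ((1 - p) + (1 - q)) := by
  rcases q with _ | q
  · simp [hD.apply_eq_zero_of_mem_grassDeg_zero hv]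
  · have h := vecField_mem_Wlevel (D := D) (mul_mem_exteriorPower hu
      (hD.apply_mem_grassDeg_pred hv b)) d
    convert h using 2
    push_cast
    ring

theorem vecField_bracket_mem_Wlevel {p q : ℕ} (b d : Fin n) {u v : Λ}
    (hu : u ∈ grassDeg K n p) (hv : v ∈ grassDeg K n q) :
    vecField D b u ∘ₗ vecField D d v
        - (-1 : K) ^ ((1 - p : ℤ) * (1 - q)) • (vecField D d v ∘ₗ vecField D b u)
      ∈ Wlevel K n D ((1 - p) + (1 - q)) := by
  rw [vecField_bracket hD b d hu hv]
  refine sub_mem (vecField_mul_apply_mem_Wlevel hD b d hu hv) (Submodule.smul_mem _ _ ?_)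
  rw [add_comm]
  exact vecField_mul_apply_mem_Wlevel hD d b hv hu

theorem divMap_vecField_bracket {p q : ℕ} (b d : Fin n) {u v : Λ}
    (hu : u ∈ grassDeg K n p) (hv : v ∈ grassDeg K n q) :
    divMap K n D (vecField D b u ∘ₗ vecField D d v
        - (-1 : K) ^ ((1 - p : ℤ) * (1 - q)) • (vecField D d v ∘ₗ vecField D b u))
      = ((-1 : K) ^ ((1 - p : ℤ) * (1 - q)) * (-1) ^ q) •
          vecField D d v (divMap K n D (vecField D b u))
        - (-1 : K) ^ p • vecField D b u (divMap K n D (vecField D d v)) := by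
  simp only [vecField_bracket hD b d hu hv, map_sub, map_smul, divMap_vecField hD]
  simp only [vecField_apply, LinearMap.comp_apply, LinearMap.mulLeft_apply]
  rw [hD.leibniz hu, hD.leibniz hv, hD.apply_apply_eq_neg d b v, hD.apply_apply_eq_neg b d u,
    mul_neg, mul_neg]
  linear_combination (norm := module) hD.apply_mul_apply_comm b d hu hv

theorem vecField_apply_eq_zero_of_ne_one {q : ℕ} (hq : q ≠ 1) (b : Fin n) {u y : Λ}
    (hu : u ∈ grassDeg K n n) (hy : y ∈ grassDeg K n q) : vecField D b u y = 0 := by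
  rw [vecField_apply, LinearMap.comp_apply, LinearMap.mulLeft_apply]
  rcases q with _ | _ | q
  · rw [hD.apply_eq_zero_of_mem_grassDeg_zero hy, mul_zero]
  · exact absurd rfl hq
  · have h : u * D b y ∈ grassDeg K n (n + (q + 1)) :=
      mul_mem_exteriorPower hu (hD.apply_mem_grassDeg_pred hy b)
    rwa [grassDeg_eq_bot (by omega), Submodule.mem_bot] at h

theorem vecField_apply_ι (b : Fin n) {u : Λ} (hu : u ∈ grassDeg K n n) (v : Fin n → K) :
    vecField D b u (ι K v) = ι K v * divMap K n D (vecField D b u) := by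
  have hvu : ι K v * u = 0 := by
    have h : ι K v * u ∈ grassDeg K n (1 + n) :=
      mul_mem_exteriorPower (p := 1) (by simp : ι K v ∈ ⋀[K]^1 (Fin n → K)) hu
    rwa [grassDeg_eq_bot (by omega), Submodule.mem_bot] at h
  have h := hD.apply_ι_mul b v u
  rw [hvu, map_zero, eq_comm, sub_eq_zero] at h
  rw [divMap_vecField hD, ← h, vecField_apply, LinearMap.comp_apply, LinearMap.mulLeft_apply,
    hD.apply_ι, ← Algebra.commutes, Algebra.smul_def]

end VectorFields

section Levels

variable {K : Type} [Field K] {n : ℕ}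
  {D : Fin n → Module.End K (ExteriorAlgebra K (Fin n → K))} (hD : IsPartials K n D)
include hD

local notation "Λ" => ExteriorAlgebra K (Fin n → K)

theorem superBracket_mem_Wlevel {i j : ℤ} {x y : Module.End K Λ}
    (hx : x ∈ Wlevel K n D i) (hy : y ∈ Wlevel K n D j) :
    superBracket ((-1 : K) ^ (i * j)) x y ∈ Wlevel K n D (i + j) := by
  refine LinearMap.apply_mem_of_mem_span₂ _ ?_ hx hy
  rintro - ⟨p, a, b, rfl, rfl⟩ - ⟨q, c, d, rfl, rfl⟩
  exact vecField_bracket_mem_Wlevel hD b d (theta_prod_mem_grassDeg a) (theta_prod_mem_grassDeg c)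

theorem divMap_superBracket {i j : ℤ} {x y : Module.End K Λ}
    (hx : x ∈ Wlevel K n D i) (hy : y ∈ Wlevel K n D j) :
    divMap K n D (superBracket ((-1 : K) ^ (i * j)) x y)
      = ((-1 : K) ^ (i * j) * (-1) ^ (1 - j)) • y (divMap K n D x)
        - (-1 : K) ^ (1 - i) • x (divMap K n D y) := by
  let B : Module.End K Λ →ₗ[K] Module.End K Λ →ₗ[K] Λ := LinearMap.id.compl₂ (divMap K n D)
  let defect := (superBracket ((-1 : K) ^ (i * j))).compr₂ (divMap K n D)
    + (-1 : K) ^ (1 - i) • B - ((-1 : K) ^ (i * j) * (-1) ^ (1 - j)) • B.flip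
  have h : defect x y ∈ (⊥ : Submodule K Λ) := by
    refine LinearMap.apply_mem_of_mem_span₂ _ ?_ hx hy
    rintro - ⟨p, a, b, rfl, rfl⟩ - ⟨q, c, d, rfl, rfl⟩
    have := divMap_vecField_bracket hD b d (theta_prod_mem_grassDeg a) (theta_prod_mem_grassDeg c)
    simp [defect, B, superBracket_apply, Kgen_eq_vecField, this]
  rw [Submodule.mem_bot] at h
  simp only [defect, B, LinearMap.sub_apply, LinearMap.add_apply, LinearMap.smul_apply,
    LinearMap.compr₂_apply, LinearMap.compl₂_apply, LinearMap.flip_apply, LinearMap.id_apply] at h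
  linear_combination (norm := module) h

theorem apply_eq_zero_of_mem_Wlevel {q : ℕ} (hq : q ≠ 1) {x : Module.End K Λ}
    (hx : x ∈ Wlevel K n D (1 - n)) {y : Λ} (hy : y ∈ grassDeg K n q) : x y = 0 := by
  refine (Submodule.span_le (p := LinearMap.ker (LinearMap.applyₗ y)).2 ?_ hx : _)
  rintro - ⟨p, a, b, hp, rfl⟩
  obtain rfl : n = p := by omega
  exact vecField_apply_eq_zero_of_ne_one hD hq b (theta_prod_mem_grassDeg a) hy

theorem apply_ι_of_mem_Wlevel {x : Module.End K Λ} (hx : x ∈ Wlevel K n D (1 - n))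
    (v : Fin n → K) : x (ι K v) = ι K v * divMap K n D x := by
  have h := (Submodule.span_le (p := LinearMap.ker (LinearMap.applyₗ (ι K v)
    - LinearMap.mulLeft K (ι K v) ∘ₗ divMap K n D))).2 ?_ hx
  · simpa [sub_eq_zero] using h
  rintro - ⟨p, a, b, hp, rfl⟩
  obtain rfl : n = p := by omega
  simpa [Kgen_eq_vecField, sub_eq_zero] using vecField_apply_ι hD b (theta_prod_mem_grassDeg a) v

theorem Slevel_one_sub_eq_bot : Slevel K n D (1 - n) = ⊥ := by
  refine eq_bot_iff.2 fun x hx => (Submodule.mem_bot K).2 (?_ : x = 0)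
  rw [Slevel, Submodule.mem_inf, LinearMap.mem_ker] at hx
  obtain ⟨hxW, hxdiv⟩ := hx
  refine linearMap_ext_exteriorPower fun q y hy => ?_
  by_cases hq : q = 1
  · subst hq
    obtain ⟨v, rfl⟩ : y ∈ LinearMap.range (ι K : (Fin n → K) →ₗ[K] Λ) := by
      simpa [grassDeg] using hy
    rw [apply_ι_of_mem_Wlevel hD hxW, hxdiv, mul_zero, LinearMap.zero_apply]
  · rw [apply_eq_zero_of_mem_Wlevel hD hq hxW hy, LinearMap.zero_apply]

end Levels

theorem S_graded_subalgebra_general (K : Type) [Field K] (n : ℕ)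
    (D : Fin n → Module.End K (ExteriorAlgebra K (Fin n → K)))
    (hD : IsPartials K n D) :
    (∀ i j : ℤ, ∀ x ∈ Slevel K n D i, ∀ y ∈ Slevel K n D j,
      x ∘ₗ y - ((-1 : K) ^ (i * j)) • (y ∘ₗ x) ∈ Slevel K n D (i + j)) ∧
    (∀ ℓ : ℤ, ℓ < 2 - (n : ℤ) → Slevel K n D ℓ = ⊥) := by
  refine ⟨fun i j x hx y hy => ?_, fun ℓ hℓ => ?_⟩
  · simp only [Slevel, Submodule.mem_inf, LinearMap.mem_ker] at hx hy ⊢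
    rw [← superBracket_apply]
    refine ⟨superBracket_mem_Wlevel hD hx.1 hy.1, ?_⟩
    rw [divMap_superBracket hD hx.1 hy.1, hx.2, hy.2, map_zero, map_zero, smul_zero, smul_zero,
      sub_zero]
  · obtain hℓ | rfl := (Int.lt_add_one_iff.1 (by omega : ℓ < 1 - n + 1)).lt_or_eq
    · rw [Slevel, Wlevel_eq_bot hℓ, bot_inf_eq]
    · exact Slevel_one_sub_eq_bot hD

/-- The divergence-zero derivations `S(n) ⊂ W(n)` form a `ℤ`-graded Lie
subalgebra of `W(n)` (closed under the superbracket, level-wise), whose components vanish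
below level `−n+2`. -/
theorem S_graded_subalgebra (K : Type) [Field K] [CharZero K] (n : ℕ)
    (D : Fin n → Module.End K (ExteriorAlgebra K (Fin n → K)))
    (hD : IsPartials K n D) :
    (∀ i j : ℤ, ∀ x ∈ Slevel K n D i, ∀ y ∈ Slevel K n D j,
      x ∘ₗ y - ((-1 : K) ^ (i * j)) • (y ∘ₗ x) ∈ Slevel K n D (i + j)) ∧
    (∀ ℓ : ℤ, ℓ < 2 - (n : ℤ) → Slevel K n D ℓ = ⊥) :=
  S_graded_subalgebra_general K n D hD
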